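/- The 3×3 Hermitian matrix Θ = [[1, i√2 γ, -γ], [-i√2 γ, 1-γ+2γ², i√2 γ], [-γ, -i√2 γ, 1]] has eigenvalues 1-γ and 1 + γ² ± √(5γ² + γ⁴ - 2γ³), and is positive definite for all γ in the open interval (0, 1). -/

import Mathlib

/-!
The characteristic polynomial of `Θ` factors as
`(μ - (1 - γ)) * ((μ - 1 - γ²)² - (5γ² + γ⁴ - 2γ³))`, which gives the spectrum. Since `Θ` is
Hermitian, it is positive definite as soon as these three real eigenvalues are positive; for the
smallest one this follows from `(1 + γ²)² - (5γ² + γ⁴ - 2γ³) = (1 - γ)² (1 + 2γ)`, so positive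
definiteness in fact holds on all of `-1/2 < γ < 1`.
-/

open Complex Matrix ComplexOrder

namespace Matrix

variable {n : Type*} [Fintype n] [DecidableEq n]

theorem spectrum_eq_of_det_smul_one_sub_eq_prod {K : Type*} [Field K] (A : Matrix n n K)
    (s : Multiset K) (h : ∀ μ : K, (μ • (1 : Matrix n n K) - A).det = (s.map (μ - ·)).prod) :
    spectrum K A = {μ | μ ∈ s} := by
  ext μ
  simp [spectrum.mem_iff, isUnit_iff_isUnit_det, Algebra.algebraMap_eq_smul_one, h,
    Multiset.prod_eq_zero_iff, sub_eq_zero]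

theorem IsHermitian.posDef_of_spectrum_pos {𝕜 : Type*} [RCLike 𝕜] {A : Matrix n n 𝕜}
    (hA : A.IsHermitian) (h : ∀ r : ℝ, (r : 𝕜) ∈ spectrum 𝕜 A → 0 < r) : A.PosDef :=
  hA.posDef_iff_eigenvalues_pos.mpr fun i =>
    h _ (spectrum.algebraMap_mem 𝕜 (hA.eigenvalues_mem_spectrum_real i))

end Matrix

noncomputable def theta (γ : ℝ) : Matrix (Fin 3) (Fin 3) ℂ :=
  !![1, I * Real.sqrt 2 * γ, (-γ : ℂ);
     -(I * Real.sqrt 2 * γ), ((1 - γ + 2 * γ ^ 2 : ℝ) : ℂ), I * Real.sqrt 2 * γ;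
     (-γ : ℂ), -(I * Real.sqrt 2 * γ), 1]

theorem theta_disc_nonneg (γ : ℝ) : 0 ≤ 5 * γ ^ 2 + γ ^ 4 - 2 * γ ^ 3 := by
  have : 5 * γ ^ 2 + γ ^ 4 - 2 * γ ^ 3 = γ ^ 2 * ((γ - 1) ^ 2 + 4) := by ring
  rw [this]; positivity

theorem det_smul_one_sub_theta (γ : ℝ) (μ : ℂ) :
    (μ • (1 : Matrix (Fin 3) (Fin 3) ℂ) - theta γ).det =
      (μ - ((1 - γ : ℝ) : ℂ)) *
        (μ - ((1 + γ ^ 2 + Real.sqrt (5 * γ ^ 2 + γ ^ 4 - 2 * γ ^ 3) : ℝ) : ℂ)) *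
        (μ - ((1 + γ ^ 2 - Real.sqrt (5 * γ ^ 2 + γ ^ 4 - 2 * γ ^ 3) : ℝ) : ℂ)) := by
  have hsqrt_disc : ((Real.sqrt (5 * γ ^ 2 + γ ^ 4 - 2 * γ ^ 3) : ℝ) : ℂ) ^ 2 =
      5 * (γ : ℂ) ^ 2 + (γ : ℂ) ^ 4 - 2 * (γ : ℂ) ^ 3 := by
    rw [← ofReal_pow, Real.sq_sqrt (theta_disc_nonneg γ)]; push_cast; ring
  have hI_sqrt_two : (I * Real.sqrt 2) ^ 2 = -2 := by
    rw [mul_pow, I_sq, ← ofReal_pow, Real.sq_sqrt zero_le_two]; norm_num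
  rw [det_fin_three]
  simp only [theta, ofReal_add, ofReal_sub, ofReal_one, ofReal_mul, ofReal_ofNat, ofReal_pow,
    Fin.isValue, Matrix.sub_apply, Matrix.smul_apply, one_apply_eq, smul_eq_mul, mul_one,
    of_apply, cons_val', cons_val_zero, cons_val_fin_one, cons_val_one, cons_val, ne_eq,
    Fin.reduceEq, not_false_eq_true, one_apply_ne, mul_zero, zero_sub, mul_neg, sub_neg_eq_add,
    zero_add, neg_mul, zero_ne_one, one_ne_zero, neg_neg]
  linear_combination (μ - 1 + γ) * (hsqrt_disc + 2 * (γ : ℂ) ^ 2 * hI_sqrt_two)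

theorem sqrt_theta_disc_lt (γ : ℝ) (h₁ : -1/2 < γ) (h₂ : γ < 1) :
    Real.sqrt (5 * γ ^ 2 + γ ^ 4 - 2 * γ ^ 3) < 1 + γ ^ 2 := by
  rw [Real.sqrt_lt' (by positivity)]
  nlinarith [mul_pos (mul_pos (sub_pos.2 h₂) (sub_pos.2 h₂)) (show 0 < 1 + 2 * γ by linarith)]

theorem theta_isHermitian (γ : ℝ) : (theta γ).IsHermitian := by
  ext i j
  fin_cases i <;> fin_cases j <;> simp [theta, conjTranspose_apply]

theorem spectrum_theta (γ : ℝ) :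
    spectrum ℂ (theta γ) =
      {((1 - γ : ℝ) : ℂ),
       ((1 + γ ^ 2 + Real.sqrt (5 * γ ^ 2 + γ ^ 4 - 2 * γ ^ 3) : ℝ) : ℂ),
       ((1 + γ ^ 2 - Real.sqrt (5 * γ ^ 2 + γ ^ 4 - 2 * γ ^ 3) : ℝ) : ℂ)} := by
  rw [spectrum_eq_of_det_smul_one_sub_eq_prod _ {_, _, _} fun μ => by
    simpa only [Multiset.insert_eq_cons, Multiset.map_cons, Multiset.prod_cons,
      Multiset.map_singleton, Multiset.prod_singleton, mul_assoc] using det_smul_one_sub_theta γ μ]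
  ext; simp

theorem theta_posDef (γ : ℝ) (h₁ : -1/2 < γ) (h₂ : γ < 1) : (theta γ).PosDef := by
  refine (theta_isHermitian γ).posDef_of_spectrum_pos fun r hr => ?_
  have hlt := sqrt_theta_disc_lt γ h₁ h₂
  have hnonneg := Real.sqrt_nonneg (5 * γ ^ 2 + γ ^ 4 - 2 * γ ^ 3)
  simp only [spectrum_theta, Set.mem_insert_iff, Set.mem_singleton_iff,
    RCLike.ofReal_eq_complex_ofReal, ofReal_inj] at hr
  rcases hr with rfl | rfl | rfl <;> linarith

theorem stmt6 (γ : ℝ) :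
    spectrum ℂ
      (!![1, I * Real.sqrt 2 * γ, (-γ : ℂ);
          -(I * Real.sqrt 2 * γ), ((1 - γ + 2 * γ ^ 2 : ℝ) : ℂ), I * Real.sqrt 2 * γ;
          (-γ : ℂ), -(I * Real.sqrt 2 * γ), 1] : Matrix (Fin 3) (Fin 3) ℂ)
      = {((1 - γ : ℝ) : ℂ),
         ((1 + γ ^ 2 + Real.sqrt (5 * γ ^ 2 + γ ^ 4 - 2 * γ ^ 3) : ℝ) : ℂ),
         ((1 + γ ^ 2 - Real.sqrt (5 * γ ^ 2 + γ ^ 4 - 2 * γ ^ 3) : ℝ) : ℂ)} ∧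
    (0 < γ → γ < 1 →
      (!![1, I * Real.sqrt 2 * γ, (-γ : ℂ);
          -(I * Real.sqrt 2 * γ), ((1 - γ + 2 * γ ^ 2 : ℝ) : ℂ), I * Real.sqrt 2 * γ;
          (-γ : ℂ), -(I * Real.sqrt 2 * γ), 1] : Matrix (Fin 3) (Fin 3) ℂ).PosDef) :=
  ⟨spectrum_theta γ, fun h₀ h₁ => theta_posDef γ (by linarith) h₁⟩
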